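/- arXiv:1701.00544 — 12 statements merged into one kernel-verified Lean document; each statement's English description precedes it below -/
import Mathlib

section
/- For all integers n ≥ 0 and 0 ≤ m ≤ n, and any sequence a : ℕ → ℝ with b n = ∑_{k=0}^n C(n,k) a k, we have ∑_{k=0}^n C(n,k) * C(k,m) * a k = C(n,m) * ∇^m b n, where ∇ is the backward difference (∇f)(n) = f(n) - f(n-1) (with f(-1) interpreted via n ≥ 1 when applied, and ∇^0 b n = b n). -/
/-!
The sequence `b` is the binomial transform of `a`, and by Pascal's rule the forward difference of
the binomial transform of `a` is the binomial transform of the shifted sequence `k ↦ a (k + 1)`.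
Hence `∇ᵐ b n = Δᵐ b (n - m) = ∑ⱼ C(n-m, j) a (j + m)`, and multiplying by `C(n, m)` gives the
left-hand side through `C(n, k) C(k, m) = C(n, m) C(n - m, k - m)`.
-/

open Finset fwdDiff

def binomialTransform {G : Type*} [AddCommMonoid G] (a : ℕ → G) (n : ℕ) : G :=
  ∑ k ∈ range (n + 1), n.choose k • a k

section

variable {G : Type*} [AddCommGroup G]

theorem fwdDiff_binomialTransform (a : ℕ → G) :
    Δ_[1] (binomialTransform a) = binomialTransform (fun k ↦ a (k + 1)) := by
  ext n
  simp only [fwdDiff, binomialTransform]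
  rw [sum_choose_succ_nsmul (fun i _ ↦ a i) n, add_sub_cancel_left]

theorem fwdDiff_iter_binomialTransform (a : ℕ → G) (m : ℕ) :
    (Δ_[1])^[m] (binomialTransform a) = binomialTransform (fun k ↦ a (k + m)) := by
  induction m with
  | zero => rfl
  | succ m ih =>
    rw [Function.iterate_succ_apply', ih, fwdDiff_binomialTransform]
    simp only [add_right_comm _ 1 m, add_assoc]

theorem fwdDiff_iter_apply_sub_eq_sum (f : ℕ → G) {m n : ℕ} (hm : m ≤ n) :
    (Δ_[1])^[m] f (n - m) = ∑ i ∈ range (m + 1), ((-1 : ℤ) ^ i * m.choose i) • f (n - i) := by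
  rw [fwdDiff_iter_eq_sum_shift, ← sum_range_reflect]
  refine sum_congr rfl fun i hi ↦ ?_
  have hi : i ≤ m := Nat.lt_succ_iff.mp (mem_range.mp hi)
  rw [Nat.add_sub_cancel, Nat.sub_sub_self hi, Nat.choose_symm hi, smul_eq_mul, mul_one]
  congr 2
  omega

theorem sum_choose_mul_choose_nsmul (a : ℕ → G) {m n : ℕ} (hm : m ≤ n) :
    ∑ k ∈ range (n + 1), (n.choose k * k.choose m) • a k =
      n.choose m • binomialTransform (fun k ↦ a (k + m)) (n - m) := by
  have hlow : ∑ k ∈ range m, (n.choose k * k.choose m) • a k = 0 :=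
    sum_eq_zero fun k hk ↦ by rw [Nat.choose_eq_zero_of_lt (mem_range.mp hk), mul_zero, zero_smul]
  rw [show n + 1 = m + (n - m + 1) by omega, sum_range_add, hlow, zero_add, binomialTransform,
    smul_sum]
  refine sum_congr rfl fun j _ ↦ ?_
  rw [Nat.choose_mul (Nat.le_add_right m j), Nat.add_sub_cancel_left, mul_smul, add_comm j m]

end

theorem stmt_0 (a b : ℕ → ℝ)
    (hb : ∀ n, b n = ∑ k ∈ Finset.range (n+1), (n.choose k : ℝ) * a k)
    (n m : ℕ) (hm : m ≤ n) :
    ∑ k ∈ Finset.range (n+1), (n.choose k : ℝ) * (k.choose m : ℝ) * a k =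
      (n.choose m : ℝ) * ∑ i ∈ Finset.range (m+1), (-1 : ℝ)^i * (m.choose i : ℝ) * b (n - i) := by
  have hb' : b = binomialTransform a :=
    funext fun n ↦ by simp only [hb, binomialTransform, nsmul_eq_mul]
  have hΔ : (Δ_[1])^[m] b (n - m) = binomialTransform (fun k ↦ a (k + m)) (n - m) := by
    rw [hb', fwdDiff_iter_binomialTransform]
  have key := sum_choose_mul_choose_nsmul a hm
  rw [← hΔ, fwdDiff_iter_apply_sub_eq_sum b hm] at key
  simpa only [nsmul_eq_mul, zsmul_eq_mul, Nat.cast_mul, Int.cast_mul, Int.cast_pow,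
    Int.cast_neg, Int.cast_one, Int.cast_natCast, mul_assoc] using key
end

section
/- For all integers 0 ≤ m ≤ n and any sequence b : ℕ → ℝ, C(n,m) * ∇^m b n = ∑_{j=0}^n C(n,j) * C(j, n-m) * (-1)^{n-j} * b j, where ∇^m b n = ∑_{i=0}^m (-1)^i (m choose i) b (n-i). -/
/-! Substituting `j = n - i`, the right-hand side becomes a sum over `i ≤ n` whose terms vanish
for `i > m` (then `n - i < n - m`), and for `i ≤ m` the coefficients agree by the
subset-of-a-subset identity `C(n,m) C(m,i) = C(n,i) C(n-i,m-i)` together with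
`C(n-i, n-m) = C(n-i, m-i)`. -/

open Finset

theorem Nat.choose_mul_choose_eq_choose_sub_mul_choose_sub {n m i : ℕ} (hm : m ≤ n)
    (hi : i ≤ m) : n.choose m * m.choose i = n.choose (n - i) * (n - i).choose (n - m) := by
  have hsymm : (n - i).choose (n - m) = (n - i).choose (m - i) := by
    rw [← Nat.choose_symm (Nat.sub_le_sub_right hm i)]
    congr 1
    omega
  rw [Nat.choose_mul hi, Nat.choose_symm (hi.trans hm), hsymm]

theorem stmt_1 (b : ℕ → ℝ) (n m : ℕ) (hm : m ≤ n) :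
    (n.choose m : ℝ) * ∑ i ∈ Finset.range (m+1), (-1 : ℝ)^i * (m.choose i : ℝ) * b (n - i) =
      ∑ j ∈ Finset.range (n+1), (n.choose j : ℝ) * (j.choose (n - m) : ℝ) * (-1 : ℝ)^(n - j) * b j := by
  rw [← sum_range_reflect _ (n + 1), mul_sum,
    ← sum_subset (range_subset_range.2 (Nat.succ_le_succ hm))]
  · refine sum_congr rfl fun i hi => ?_
    have hi : i ≤ m := Nat.lt_succ_iff.mp (mem_range.mp hi)
    have hcoeff : (n.choose m * m.choose i : ℝ) = n.choose (n - i) * (n - i).choose (n - m) := by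
      exact_mod_cast Nat.choose_mul_choose_eq_choose_sub_mul_choose_sub hm hi
    rw [Nat.add_sub_cancel, Nat.sub_sub_self (hi.trans hm)]
    linear_combination (-1 : ℝ) ^ i * b (n - i) * hcoeff
  · intro i hin hi
    have hin : i < n + 1 := mem_range.mp hin
    have hi : m < i := by simpa using hi
    rw [Nat.choose_eq_zero_of_lt (by omega : n + 1 - 1 - i < n - m)]
    simp
end

section
/- For any sequence a : ℕ → ℝ with binomial transform b n = ∑_{k=0}^n C(n,k) a k, and any real x, ∑_{k=0}^n C(n,k) * a k * x^k = ∑_{j=0}^n C(n,j) * b j * x^j * (1-x)^{n-j}. -/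
/-!
Substituting `b j = ∑ₖ C(j, k) a k` and exchanging the two sums, the coefficient of `a k` on the
right is `∑ⱼ C(n, j) C(j, k) x ^ j y ^ (n - j)` with `y = 1 - x`. Since
`C(n, j) C(j, k) = C(n, k) C(n - k, j - k)`, this is `C(n, k) x ^ k` times the binomial expansion
of `(x + y) ^ (n - k) = 1`.
-/

open Finset

section BinomialTransform

variable {R : Type*} [CommSemiring R]

theorem sum_range_succ_choose_mul_eq_of_le (a : ℕ → R) {j n : ℕ} (hjn : j ≤ n) :
    ∑ k ∈ range (j + 1), (j.choose k : R) * a k = ∑ k ∈ range (n + 1), (j.choose k : R) * a k := by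
  refine sum_subset (range_subset_range.2 (by omega)) fun k _ hk => ?_
  rw [Nat.choose_eq_zero_of_lt (by simpa using hk), Nat.cast_zero, zero_mul]

theorem sum_range_succ_choose_mul_choose_mul_pow_mul_pow (x y : R) {n k : ℕ} (hkn : k ≤ n) :
    ∑ j ∈ range (n + 1), (n.choose j * j.choose k : R) * x ^ j * y ^ (n - j) =
      n.choose k * x ^ k * (x + y) ^ (n - k) := by
  have h_low : ∑ j ∈ range k, (n.choose j * j.choose k : R) * x ^ j * y ^ (n - j) = 0 :=
    sum_eq_zero fun j hj => by
      rw [Nat.choose_eq_zero_of_lt (mem_range.1 hj)]; simp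
  rw [← sum_range_add_sum_Ico _ (by omega : k ≤ n + 1), h_low, zero_add, sum_Ico_eq_sum_range,
    add_pow, mul_sum, show n + 1 - k = n - k + 1 by omega]
  refine sum_congr rfl fun i hi => ?_
  have h_choose : n.choose (k + i) * (k + i).choose k = n.choose k * (n - k).choose i := by
    rw [Nat.choose_mul (by omega), Nat.add_sub_cancel_left]
  rw [← Nat.cast_mul, h_choose, Nat.cast_mul, pow_add, show n - (k + i) = n - k - i by omega]
  ring

theorem sum_range_succ_choose_mul_binomialTransform_mul_pow_mul_pow (a : ℕ → R) (x y : R)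
    (n : ℕ) :
    ∑ j ∈ range (n + 1), (n.choose j : R) * (∑ k ∈ range (j + 1), (j.choose k : R) * a k) *
        x ^ j * y ^ (n - j) =
      ∑ k ∈ range (n + 1), (n.choose k : R) * a k * x ^ k * (x + y) ^ (n - k) := by
  calc
    _ = ∑ j ∈ range (n + 1), ∑ k ∈ range (n + 1),
          (n.choose j * j.choose k : R) * x ^ j * y ^ (n - j) * a k := by
      refine sum_congr rfl fun j hj => ?_
      rw [sum_range_succ_choose_mul_eq_of_le a (Nat.le_of_lt_succ (mem_range.1 hj)), mul_sum,
        sum_mul, sum_mul]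
      exact sum_congr rfl fun k _ => by ring
    _ = ∑ k ∈ range (n + 1), (n.choose k * x ^ k * (x + y) ^ (n - k)) * a k := by
      rw [sum_comm]
      refine sum_congr rfl fun k hk => ?_
      rw [← sum_mul, sum_range_succ_choose_mul_choose_mul_pow_mul_pow x y
        (Nat.le_of_lt_succ (mem_range.1 hk))]
    _ = _ := sum_congr rfl fun k _ => by ring

end BinomialTransform

theorem stmt_4 (a b : ℕ → ℝ)
    (hb : ∀ n, b n = ∑ k ∈ Finset.range (n+1), (n.choose k : ℝ) * a k)
    (n : ℕ) (x : ℝ) :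
    ∑ k ∈ Finset.range (n+1), (n.choose k : ℝ) * a k * x^k =
      ∑ j ∈ Finset.range (n+1), (n.choose j : ℝ) * b j * x^j * (1 - x)^(n - j) := by
  simp only [hb, sum_range_succ_choose_mul_binomialTransform_mul_pow_mul_pow, add_sub_cancel,
    one_pow, mul_one]
end

section
/- For any sequence a : ℕ → ℝ with binomial transform b n = ∑_{k=0}^n C(n,k) a k, and any real x, ∑_{k=0}^n C(n,k) * a k * x^k = ∑_{m=0}^n C(n,m) * (∇^m b n) * (x-1)^m. -/
/-!
Writing `x = (x - 1) + 1` and expanding `x ^ k` binomially, the coefficient of `(x - 1) ^ m` on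
the left is `C(n, m)` times the binomial transform of the shifted sequence `k ↦ a (k + m)` at
`n - m`, because `C(n, k) C(k, m) = C(n, m) C(n - m, k - m)`. On the other hand, Pascal's rule
shows that the forward difference of a binomial transform is the binomial transform of the shifted
sequence, so this coefficient is `Δ^m b (n - m)`, which is the backward difference `∇^m b n`.
-/

open Finset fwdDiff

section FwdDiff

variable {G : Type*} [AddCommGroup G]

theorem fwdDiff_iter_eq_sum_sub (f : ℕ → G) {m n : ℕ} (h : m ≤ n) :
    (Δ_[1])^[m] f (n - m) = ∑ i ∈ range (m + 1), ((-1 : ℤ) ^ i * m.choose i) • f (n - i) := by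
  rw [fwdDiff_iter_eq_sum_shift, ← sum_range_reflect]
  refine sum_congr rfl fun i hi ↦ ?_
  have hi : i ≤ m := Nat.lt_succ_iff.mp (mem_range.mp hi)
  rw [Nat.add_sub_cancel, Nat.sub_sub_self hi, Nat.choose_symm hi, smul_eq_mul, mul_one]
  congr 2
  omega

end FwdDiff

theorem choose_add_mul_choose (n m j : ℕ) :
    n.choose (m + j) * (m + j).choose m = n.choose m * (n - m).choose j := by
  simpa using Nat.choose_mul (n := n) (Nat.le_add_right m j)

theorem sum_choose_mul_mul_add_one_pow {R : Type*} [CommSemiring R] (a : ℕ → R) (n : ℕ) (y : R) :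
    ∑ k ∈ range (n + 1), (n.choose k : R) * a k * (y + 1) ^ k =
      ∑ m ∈ range (n + 1),
        (n.choose m : R) * binomialTransform (fun k ↦ a (k + m)) (n - m) * y ^ m := by
  calc ∑ k ∈ range (n + 1), (n.choose k : R) * a k * (y + 1) ^ k
      = ∑ k ∈ range (n + 1), ∑ m ∈ range (k + 1),
          (n.choose k * k.choose m : ℕ) * a k * y ^ m := by
        refine sum_congr rfl fun k _ ↦ ?_
        rw [add_pow, mul_sum]
        refine sum_congr rfl fun m _ ↦ ?_
        push_cast
        ring
    _ = ∑ m ∈ range (n + 1), ∑ k ∈ Ico m (n + 1),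
          (n.choose k * k.choose m : ℕ) * a k * y ^ m := by
        refine sum_comm' fun k m ↦ ?_
        simp only [mem_range, mem_Ico]
        omega
    _ = _ := by
        refine sum_congr rfl fun m hm ↦ ?_
        have hm : m ≤ n := Nat.lt_succ_iff.mp (mem_range.mp hm)
        rw [sum_Ico_eq_sum_range, binomialTransform, mul_sum, sum_mul, Nat.sub_add_comm hm]
        refine sum_congr rfl fun j _ ↦ ?_
        rw [choose_add_mul_choose, nsmul_eq_mul, add_comm j m]
        push_cast
        ring

theorem stmt_8 (a b : ℕ → ℝ)
    (hb : ∀ n, b n = ∑ k ∈ Finset.range (n+1), (n.choose k : ℝ) * a k)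
    (n : ℕ) (x : ℝ) :
    ∑ k ∈ Finset.range (n+1), (n.choose k : ℝ) * a k * x^k =
      ∑ m ∈ Finset.range (n+1), (n.choose m : ℝ) *
        (∑ i ∈ Finset.range (m+1), (-1 : ℝ)^i * (m.choose i : ℝ) * b (n - i)) * (x - 1)^m := by
  have hba : b = binomialTransform a := funext fun n ↦ by simp [hb, binomialTransform]
  have backward_diff : ∀ m ∈ range (n + 1),
      ∑ i ∈ range (m + 1), (-1 : ℝ) ^ i * (m.choose i : ℝ) * b (n - i) =
        binomialTransform (fun k ↦ a (k + m)) (n - m) := by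
    intro m hm
    rw [← fwdDiff_iter_binomialTransform, ← hba,
      fwdDiff_iter_eq_sum_sub b (Nat.lt_succ_iff.mp (mem_range.mp hm))]
    simp [zsmul_eq_mul]
  have expansion := sum_choose_mul_mul_add_one_pow a n (x - 1)
  rw [sub_add_cancel] at expansion
  rw [expansion]
  exact sum_congr rfl fun m hm ↦ by rw [backward_diff m hm]
end

section
/- For any sequence b : ℕ → ℝ and n ≥ 0, ∑_{m=0}^n C(n,m) * ∇^m b n = ∑_{j=0}^n C(n,j) * (-1)^{n-j} * 2^j * b j, where ∇^m b n = ∑_{i=0}^m (-1)^i (m choose i) b (n-i). -/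
/-!
Write `S` for the backward shift `b ↦ (k ↦ b (k - 1))` on sequences and `∇ = 1 - S` for the
backward difference, so that `∇^m b n = ∑ (-1)^i C(m,i) b (n - i)` by the binomial theorem.
Then `∑ₘ C(n,m) ∇^m = (∇ + 1)^n = (2 - S)^n`, and expanding `(2 - S)^n` binomially and evaluating
at `n` gives `∑ⱼ C(n,j) 2^j (-1)^(n-j) b (n - (n - j)) = ∑ⱼ C(n,j) (-1)^(n-j) 2^j b j`.
-/

open Finset

namespace Module.End

variable {R M : Type*} [Semiring R] [AddCommMonoid M] [Module R M]

theorem add_pow_apply {x y : Module.End R M} (h : Commute x y) (n : ℕ) (v : M) :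
    ((x + y) ^ n) v = ∑ m ∈ range (n + 1), n.choose m • (x ^ m) ((y ^ (n - m)) v) := by
  rw [h.add_pow, LinearMap.sum_apply]
  refine sum_congr rfl fun m _ => ?_
  rw [← Nat.cast_comm, mul_apply, natCast_apply, mul_apply]

theorem add_one_pow_apply (x : Module.End R M) (n : ℕ) (v : M) :
    ((x + 1) ^ n) v = ∑ m ∈ range (n + 1), n.choose m • (x ^ m) v := by
  simp only [add_pow_apply (Commute.one_right x), one_pow, one_apply]

end Module.End

open Module.End

variable {R : Type*} [CommRing R]

variable (R) in
def backShift : Module.End R (ℕ → R) := LinearMap.funLeft R R (· - 1)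

variable (R) in
def backDiff : Module.End R (ℕ → R) := 1 - backShift R

theorem backShift_pow_apply (k : ℕ) (b : ℕ → R) (n : ℕ) :
    (backShift R ^ k) b n = b (n - k) := by
  induction k generalizing b with
  | zero => rfl
  | succ k ih =>
    rw [pow_succ, mul_apply, ih]
    rfl

theorem neg_backShift_pow_apply (k : ℕ) (b : ℕ → R) (n : ℕ) :
    ((-backShift R) ^ k) b n = (-1) ^ k * b (n - k) := by
  rw [← neg_one_smul R (backShift R), smul_pow, LinearMap.smul_apply, Pi.smul_apply,
    backShift_pow_apply, smul_eq_mul]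

theorem backDiff_pow_apply (m : ℕ) (b : ℕ → R) (n : ℕ) :
    (backDiff R ^ m) b n = ∑ i ∈ range (m + 1), (-1) ^ i * m.choose i * b (n - i) := by
  rw [backDiff, sub_eq_neg_add, add_one_pow_apply, Finset.sum_apply]
  refine sum_congr rfl fun i _ => ?_
  rw [Pi.smul_apply, neg_backShift_pow_apply, nsmul_eq_mul]
  ring

theorem backDiff_add_one : backDiff R + 1 = algebraMap R _ 2 - backShift R := by
  rw [backDiff, map_ofNat, ← one_add_one_eq_two]
  abel

theorem algebraMap_sub_backShift_pow_apply (r : R) (n : ℕ) (b : ℕ → R) :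
    ((algebraMap R _ r - backShift R) ^ n) b n =
      ∑ j ∈ range (n + 1), n.choose j * (-1) ^ (n - j) * r ^ j * b j := by
  rw [sub_eq_add_neg, add_pow_apply (Algebra.commutes _ _), Finset.sum_apply]
  refine sum_congr rfl fun j hj => ?_
  rw [← map_pow, Module.algebraMap_end_apply, Pi.smul_apply, Pi.smul_apply,
    neg_backShift_pow_apply, Nat.sub_sub_self (mem_range_succ_iff.mp hj), nsmul_eq_mul,
    smul_eq_mul]
  ring

theorem stmt_9 (b : ℕ → ℝ) (n : ℕ) :
    ∑ m ∈ Finset.range (n+1), (n.choose m : ℝ) *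
        ∑ i ∈ Finset.range (m+1), (-1 : ℝ)^i * (m.choose i : ℝ) * b (n - i) =
      ∑ j ∈ Finset.range (n+1), (n.choose j : ℝ) * (-1 : ℝ)^(n - j) * 2^j * b j := by
  calc _ = ((backDiff ℝ + 1) ^ n) b n := by
          rw [add_one_pow_apply, Finset.sum_apply]
          simp only [Pi.smul_apply, backDiff_pow_apply, nsmul_eq_mul]
    _ = ((algebraMap ℝ _ 2 - backShift ℝ) ^ n) b n := by rw [backDiff_add_one]
    _ = _ := algebraMap_sub_backShift_pow_apply 2 n b
end

section
/- For all integers 1 ≤ m ≤ n, ∑_{k=m}^n C(n,k) * C(k,m) * (-1)^k / k = (-1)^m / m. -/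
/-!
Since `C(k, m) / k = C(k - 1, m - 1) / m`, the claim is the integer identity
`∑_{k=m}^{n} (-1)^k C(n, k) C(k - 1, m - 1) = (-1)^m` divided by `m`. That identity follows by
induction on `n` from Pascal's rule; the error term of the induction step is
`∑_k (-1)^k C(n, k) C(k, r)` with `r < n`, which vanishes because
`C(n, k) C(k, r) = C(n, r) C(n - r, k - r)` turns it into an alternating row sum of Pascal's
triangle.
-/

open Finset

theorem Nat.cast_choose_succ_succ_div {K : Type*} [Field K] [CharZero K] (j s : ℕ) :
    ((j + 1).choose (s + 1) : K) / (j + 1 : ℕ) = j.choose s / (s + 1 : ℕ) := by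
  rw [div_eq_div_iff (Nat.cast_ne_zero.2 j.succ_ne_zero) (Nat.cast_ne_zero.2 s.succ_ne_zero)]
  norm_cast
  rw [mul_comm (j.choose s), Nat.add_one_mul_choose_eq]

namespace Int

theorem sum_Icc_neg_one_pow_mul_choose_mul_choose_of_lt {r n : ℕ} (h : r < n) :
    ∑ k ∈ Icc r n, (-1) ^ k * (n.choose k : ℤ) * k.choose r = 0 := by
  obtain ⟨d, rfl⟩ := Nat.exists_eq_add_of_le h.le
  calc ∑ k ∈ Icc r (r + d), (-1) ^ k * ((r + d).choose k : ℤ) * k.choose r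
      = ∑ i ∈ Finset.range (d + 1),
          (-1) ^ r * ((r + d).choose r : ℤ) * ((-1) ^ i * d.choose i) := by
        rw [← Ico_add_one_right_eq_Icc, sum_Ico_eq_sum_range, Nat.add_assoc,
          Nat.add_sub_cancel_left]
        refine sum_congr rfl fun i _ => ?_
        have h := Nat.choose_mul (n := r + d) (k := r + i) (s := r) (by omega)
        simp only [Nat.add_sub_cancel_left] at h
        rw [mul_assoc, ← Nat.cast_mul, h]
        push_cast
        ring
    _ = 0 := by rw [← mul_sum, alternating_sum_range_choose_of_ne (by omega), mul_zero]

theorem sum_Icc_neg_one_pow_mul_choose_succ_mul_choose {s t : ℕ} (hst : s ≤ t) :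
    ∑ j ∈ Icc s t, (-1) ^ j * ((t + 1).choose (j + 1) : ℤ) * j.choose s = (-1) ^ s := by
  induction t, hst using Nat.le_induction with
  | base => simp
  | succ t hst ih =>
    calc _ = ∑ j ∈ Icc s (t + 1), (-1) ^ j * ((t + 1).choose j : ℤ) * j.choose s
          + ∑ j ∈ Icc s (t + 1), (-1) ^ j * ((t + 1).choose (j + 1) : ℤ) * j.choose s := by
          rw [← sum_add_distrib]
          refine sum_congr rfl fun j _ => ?_
          rw [Nat.choose_succ_succ]
          push_cast
          ring
      _ = (-1) ^ s := by
          rw [sum_Icc_neg_one_pow_mul_choose_mul_choose_of_lt (by omega),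
            sum_Icc_succ_top (by omega), ih, Nat.choose_succ_self]
          simp

end Int

theorem stmt_10 (n m : ℕ) (h1 : 1 ≤ m) (hmn : m ≤ n) :
    ∑ k ∈ Finset.Icc m n, (n.choose k : ℝ) * (k.choose m : ℝ) * (-1 : ℝ)^k / k =
      (-1 : ℝ)^m / m := by
  obtain ⟨s, rfl⟩ := Nat.exists_eq_add_of_le' h1
  obtain ⟨t, rfl⟩ := Nat.exists_eq_add_of_le' (h1.trans hmn)
  have hsum := Int.sum_Icc_neg_one_pow_mul_choose_succ_mul_choose (show s ≤ t by omega)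
  calc _ = -∑ j ∈ Icc s t,
        ((-1) ^ j * ((t + 1).choose (j + 1) : ℤ) * j.choose s : ℤ) / ((s + 1 : ℕ) : ℝ) := by
        rw [← map_add_right_Icc, sum_map, ← sum_neg_distrib]
        refine sum_congr rfl fun j _ => ?_
        rw [addRightEmbedding_apply, mul_right_comm, mul_div_assoc, Nat.cast_choose_succ_succ_div]
        push_cast
        ring
    _ = _ := by
        rw [← sum_div, ← Int.cast_sum, hsum]
        push_cast
        ring
end

section
/- For all integers 1 ≤ m ≤ n, C(n,m) * ∇^m H n = (-1)^{m-1} / m, where H n = ∑_{j=1}^n 1/j is the n-th harmonic number and ∇^m H n = ∑_{i=0}^m (-1)^i (m choose i) H (n-i). -/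
/-!
The alternating binomial sum is the `m`-th forward difference of `H` at `n - m`. Since
`Δ H y = 1 / (y + 1)`, this is `Δ^(m-1)` of `y ↦ 1 / (y + 1)`, and by induction
`Δ^k (y ↦ 1 / (y + 1)) y = (-1)^k k! y! / (y + k + 1)!`. At `k = m - 1`, `y = n - m` this is
`(-1)^(m-1) (m-1)! (n-m)! / n! = (-1)^(m-1) / (m * C(n, m))`.
-/

open Finset

theorem sum_alternating_choose_sub_eq_fwdDiff_iter {R : Type*} [Ring R] (f : ℕ → R) {m n : ℕ}
    (hmn : m ≤ n) :
    ∑ i ∈ range (m + 1), (-1 : R) ^ i * (m.choose i : R) * f (n - i) =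
      (fwdDiff 1)^[m] f (n - m) := by
  rw [fwdDiff_iter_eq_sum_shift, ← sum_range_reflect]
  refine sum_congr rfl fun i hi => ?_
  have him : i ≤ m := Nat.lt_succ_iff.mp (mem_range.mp hi)
  rw [Nat.add_sub_cancel, Nat.choose_symm him, zsmul_eq_mul, smul_eq_mul, mul_one,
    show n - m + i = n - (m - i) by omega]
  norm_cast

theorem fwdDiff_harmonic : fwdDiff 1 harmonic = fun y : ℕ => ((y : ℚ) + 1)⁻¹ := by
  ext y
  simp [fwdDiff, harmonic_succ]

theorem fwdDiff_iter_inv_add_one {K : Type*} [Field K] [CharZero K] (k y : ℕ) :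
    (fwdDiff 1)^[k] (fun y : ℕ => ((y : K) + 1)⁻¹) y =
      (-1) ^ k * k.factorial * y.factorial / (y + k + 1).factorial := by
  have hfac (j : ℕ) : (j.factorial : K) ≠ 0 := Nat.cast_ne_zero.mpr j.factorial_ne_zero
  induction k generalizing y with
  | zero =>
    rw [Function.iterate_zero_apply, Nat.factorial_zero, Nat.factorial_succ]
    push_cast
    field_simp [hfac]
  | succ k ih =>
    rw [Function.iterate_succ_apply', fwdDiff, ih, ih, show y + 1 + k + 1 = y + k + 1 + 1 by omega,
      show y + (k + 1) + 1 = y + k + 1 + 1 by omega]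
    simp only [Nat.factorial_succ (y + k + 1), Nat.factorial_succ y, Nat.factorial_succ k]
    push_cast
    have hpos : (y : K) + k + 1 + 1 ≠ 0 := by exact_mod_cast (y + k + 1).succ_ne_zero
    field_simp [hfac]
    ring

theorem stmt_11 (H : ℕ → ℚ) (hH : ∀ n, H n = ∑ j ∈ Finset.range n, (1 : ℚ) / (j + 1))
    (n m : ℕ) (h1 : 1 ≤ m) (hmn : m ≤ n) :
    (n.choose m : ℚ) * ∑ i ∈ Finset.range (m+1), (-1 : ℚ)^i * (m.choose i : ℚ) * H (n - i) =
      (-1 : ℚ)^(m - 1) / m := by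
  have hH_eq : H = harmonic := funext fun n => by simp [hH, harmonic, one_div]
  obtain ⟨k, rfl⟩ : ∃ k, m = k + 1 := ⟨m - 1, by omega⟩
  rw [hH_eq, sum_alternating_choose_sub_eq_fwdDiff_iter _ hmn, Function.iterate_succ_apply,
    fwdDiff_harmonic, fwdDiff_iter_inv_add_one, Nat.add_sub_cancel,
    show n - (k + 1) + k + 1 = n by omega]
  have hchoose := Nat.choose_mul_factorial_mul_factorial hmn
  rw [Nat.factorial_succ] at hchoose
  have hfac (j : ℕ) : (j.factorial : ℚ) ≠ 0 := Nat.cast_ne_zero.mpr j.factorial_ne_zero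
  have hchoose_ne : (n.choose (k + 1) : ℚ) ≠ 0 := Nat.cast_ne_zero.mpr (Nat.choose_pos hmn).ne'
  rw [← hchoose]
  push_cast
  field_simp [hfac]
end

section
/- For all n ≥ 1 and real x, ∑_{k=1}^n C(n,k) * (-1)^{k-1} * x^k / k = H n - ∑_{k=1}^n (1-x)^k / k, where H n is the n-th harmonic number. -/
/-!
Pascal's rule gives `S (n + 1) - S n = ∑ₖ C(n, k - 1) (-1)^(k-1) x^k / k` for the left-hand side `S n`,
and `C(n, k - 1) / k = C(n + 1, k) / (n + 1)` turns this into `(1 - (1 - x)^(n+1)) / (n + 1)` by the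
binomial theorem. Summing these increments gives `S n = ∑ₖ (1 - (1 - x)^k) / k`.
-/

open Finset

theorem sum_Icc_one_eq_sum_range {M : Type*} [AddCommMonoid M] (f : ℕ → M) (n : ℕ) :
    ∑ k ∈ Icc 1 n, f k = ∑ k ∈ range n, f (k + 1) := by
  rw [range_eq_Ico, sum_Ico_add' f 0 n 1, zero_add, Ico_add_one_right_eq_Icc]

theorem one_sub_one_sub_pow_eq_sum_range {R : Type*} [CommRing R] (x : R) (m : ℕ) :
    1 - (1 - x) ^ m = ∑ k ∈ range m, (m.choose (k + 1) : R) * (-1) ^ k * x ^ (k + 1) := by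
  rw [← neg_add_eq_sub x 1, add_pow, sum_range_succ']
  simp only [one_pow, mul_one, pow_zero, Nat.choose_zero_right, Nat.cast_one,
    sub_add_cancel_right, ← sum_neg_distrib]
  refine sum_congr rfl fun k _ => ?_
  rw [neg_pow, pow_succ]
  ring

section Field

variable {K : Type*} [Field K] [CharZero K]

theorem cast_choose_div_add_one (n k : ℕ) :
    (n.choose k : K) / (k + 1) = ((n + 1).choose (k + 1) : K) / (n + 1) := by
  rw [div_eq_div_iff (Nat.cast_add_one_ne_zero k) (Nat.cast_add_one_ne_zero n), mul_comm]
  exact_mod_cast Nat.add_one_mul_choose_eq n k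

theorem sum_range_choose_mul_neg_one_pow_div (x : K) (n : ℕ) :
    ∑ k ∈ range n, (n.choose (k + 1) : K) * (-1) ^ k * x ^ (k + 1) / (k + 1) =
      ∑ k ∈ range n, (1 - (1 - x) ^ (k + 1)) / (k + 1) := by
  induction n with
  | zero => simp
  | succ n ih =>
    have pascal : ∀ k ∈ range (n + 1),
        ((n + 1).choose (k + 1) : K) * (-1) ^ k * x ^ (k + 1) / (k + 1) =
          (n.choose (k + 1) : K) * (-1) ^ k * x ^ (k + 1) / (k + 1) +
            (n.choose k : K) / (k + 1) * ((-1) ^ k * x ^ (k + 1)) := by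
      intro k _
      rw [Nat.choose_succ_succ', Nat.cast_add]
      ring
    have increment : ∑ k ∈ range (n + 1),
        (n.choose k : K) / (k + 1) * ((-1) ^ k * x ^ (k + 1)) =
          (1 - (1 - x) ^ (n + 1)) / (n + 1) := by
      simp only [cast_choose_div_add_one]
      rw [one_sub_one_sub_pow_eq_sum_range, sum_div]
      exact sum_congr rfl fun k _ => by ring
    rw [sum_congr rfl pascal, sum_add_distrib, increment, sum_range_succ, Nat.choose_succ_self]
    simp only [Nat.cast_zero, zero_mul, zero_div, add_zero]
    rw [ih, sum_range_succ]

end Field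

theorem stmt_12_general (H : ℕ → ℝ) (hH : ∀ n, H n = ∑ j ∈ Finset.range n, (1 : ℝ) / (j + 1))
    (n : ℕ) (x : ℝ) :
    ∑ k ∈ Finset.Icc 1 n, (n.choose k : ℝ) * (-1 : ℝ)^(k - 1) * x^k / k =
      H n - ∑ k ∈ Finset.Icc 1 n, (1 - x)^k / k := by
  rw [hH, sum_Icc_one_eq_sum_range, sum_Icc_one_eq_sum_range, ← sum_sub_distrib]
  simp only [Nat.add_sub_cancel, Nat.cast_add, Nat.cast_one, ← sub_div]
  exact sum_range_choose_mul_neg_one_pow_div x n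

theorem stmt_12 (H : ℕ → ℝ) (hH : ∀ n, H n = ∑ j ∈ Finset.range n, (1 : ℝ) / (j + 1))
    (n : ℕ) (hn : 1 ≤ n) (x : ℝ) :
    ∑ k ∈ Finset.Icc 1 n, (n.choose k : ℝ) * (-1 : ℝ)^(k - 1) * x^k / k =
      H n - ∑ k ∈ Finset.Icc 1 n, (1 - x)^k / k :=
  stmt_12_general H hH n x
end

section
/- Let c, d : ℕ → ℝ satisfy c n = ∑_{k=0}^n C(n,k) d k for all n. Then for n ≥ 1, ∑_{k=0}^n C(n,k) * (-1)^{k-1} * H k * c k = (-1)^{n-1} * H n * d n + ∑_{m=0}^{n-1} (-1)^m * d m / (n-m), where H k is the k-th harmonic number. -/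
/-!
Expanding `c` and exchanging the two sums (using `C(n,k) C(k,j) = C(n,j) C(n-j,k-j)`), the
coefficient of `d j` is `C(n,j)` times an alternating binomial sum of `H` over `j, …, n`, i.e. up
to sign the `(n-j)`-th forward difference of `H` at `j`. As `Δ H m = 1/(m+1)` and the `s`-th
forward difference of `m ↦ 1/(m+1)` is `(-1)^s s! m! / (m+s+1)!`, that coefficient is
`(-1)^j / (n-j)` for `j < n`, while `j = n` contributes `(-1)^(n-1) H n d n`.
-/

open Finset fwdDiff Nat

theorem fwdDiff_iter_inv_add_one_s14 (r m : ℕ) :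
    (Δ_[1])^[r] (fun m : ℕ ↦ ((m : ℝ) + 1)⁻¹) m = (-1) ^ r * r ! * m ! / (m + r + 1)! := by
  induction r generalizing m with
  | zero => simp [Nat.factorial_succ]; field_simp
  | succ r ih =>
    rw [Function.iterate_succ_apply', fwdDiff, ih, ih,
      show m + 1 + r + 1 = (m + r + 1) + 1 by ring, show m + (r + 1) + 1 = (m + r + 1) + 1 by ring]
    push_cast [Nat.factorial_succ]
    field_simp
    ring

theorem alternating_sum_choose_mul_eq_fwdDiff_iter (f : ℕ → ℝ) (r m : ℕ) :
    ∑ i ∈ range (r + 1), (-1) ^ i * r.choose i * f (m + i) = (-1) ^ r * (Δ_[1])^[r] f m := by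
  rw [fwdDiff_iter_eq_sum_shift, mul_sum]
  refine sum_congr rfl fun i hi ↦ ?_
  have hsq : ((-1 : ℝ) ^ (r - i)) ^ 2 = 1 := by rw [← pow_mul, pow_mul', neg_one_sq, one_pow]
  rw [← pow_sub_mul_pow (-1 : ℝ) (Nat.le_of_lt_succ (mem_range.1 hi))]
  simp only [zsmul_eq_mul, nsmul_eq_mul, mul_one, Nat.cast_id]
  push_cast
  linear_combination (-(-1) ^ i * r.choose i * f (m + i)) * hsq

theorem alternating_sum_choose_mul_of_fwdDiff_eq_inv {H : ℕ → ℝ}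
    (hH : Δ_[1] H = fun m : ℕ ↦ ((m : ℝ) + 1)⁻¹) (r m : ℕ) :
    ∑ i ∈ range (r + 2), (-1) ^ i * (r + 1).choose i * H (m + i) = -(r ! * m ! / (m + r + 1)!) := by
  rw [alternating_sum_choose_mul_eq_fwdDiff_iter, Function.iterate_succ_apply, hH,
    fwdDiff_iter_inv_add_one_s14]
  have hsign : (-1 : ℝ) ^ (r + 1) * (-1) ^ r = -1 := by
    rw [← pow_add, Odd.neg_one_pow ⟨r, by ring⟩]
  linear_combination (r ! * m ! / (m + r + 1)! : ℝ) * hsign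

theorem choose_mul_sum_choose_mul_signed_of_fwdDiff_eq_inv {H : ℕ → ℝ}
    (hH : Δ_[1] H = fun m : ℕ ↦ ((m : ℝ) + 1)⁻¹) (j r : ℕ) :
    (j + r + 1).choose j * ∑ i ∈ range (r + 2), (r + 1).choose i * (-(-1) ^ (j + i) * H (j + i)) =
      (-1) ^ j / (r + 1) := by
  have hsum : ∑ i ∈ range (r + 2), ((r + 1).choose i : ℝ) * (-(-1) ^ (j + i) * H (j + i)) =
      -(-1) ^ j * ∑ i ∈ range (r + 2), (-1) ^ i * (r + 1).choose i * H (j + i) := by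
    rw [mul_sum]
    exact sum_congr rfl fun i _ ↦ by ring
  rw [hsum, alternating_sum_choose_mul_of_fwdDiff_eq_inv hH,
    Nat.cast_choose ℝ (by omega : j ≤ j + r + 1), show j + r + 1 - j = r + 1 by omega]
  push_cast [Nat.factorial_succ]
  field_simp

theorem sum_choose_mul_sum_choose (g d : ℕ → ℝ) (n : ℕ) :
    ∑ k ∈ range (n + 1), n.choose k * g k * ∑ j ∈ range (k + 1), k.choose j * d j =
      ∑ j ∈ range (n + 1), n.choose j * d j *
        ∑ i ∈ range (n - j + 1), (n - j).choose i * g (j + i) := by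
  simp_rw [mul_sum]
  rw [sum_comm' (t' := range (n + 1)) (s' := fun j ↦ Ico j (n + 1))
    (by intro k j; simp only [mem_range, mem_Ico]; omega)]
  refine sum_congr rfl fun j hj ↦ ?_
  rw [sum_Ico_eq_sum_range, show n + 1 - j = n - j + 1 by grind]
  refine sum_congr rfl fun i _ ↦ ?_
  have h : (n.choose (j + i) * (j + i).choose j : ℝ) = n.choose j * (n - j).choose i := by
    have := Nat.choose_mul (n := n) (Nat.le_add_right j i)
    rw [Nat.add_sub_cancel_left] at this
    exact_mod_cast this
  linear_combination (g (j + i) * d j) * h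

theorem stmt_14_general (c d : ℕ → ℝ)
    (hc : ∀ n, c n = ∑ k ∈ Finset.range (n+1), (n.choose k : ℝ) * d k)
    (H : ℕ → ℝ) (hH : ∀ n, H n = ∑ j ∈ Finset.range n, (1 : ℝ) / (j + 1))
    (n : ℕ) :
    ∑ k ∈ Finset.range (n+1), (n.choose k : ℝ) * (-1 : ℝ)^(k - 1) * H k * c k =
      (-1 : ℝ)^(n - 1) * H n * d n + ∑ m ∈ Finset.range n, (-1 : ℝ)^m * d m / (n - m : ℕ) := by
  have hΔH : Δ_[1] H = fun m : ℕ ↦ ((m : ℝ) + 1)⁻¹ := funext fun m ↦ by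
    rw [fwdDiff, hH, hH, sum_range_succ, one_div]; ring
  -- the truncated exponent `0 - 1 = 0` is harmless because `H 0 = 0`
  have hsign : ∀ k, (-1 : ℝ) ^ (k - 1) * H k = -(-1) ^ k * H k := by
    rintro (_ | k)
    · simp [hH]
    · simp [pow_succ]
  calc _ = ∑ k ∈ range (n + 1), n.choose k * (-(-1) ^ k * H k) *
          ∑ j ∈ range (k + 1), k.choose j * d j :=
        sum_congr rfl fun k _ ↦ by rw [hc, ← hsign]; ring
    _ = ∑ j ∈ range (n + 1), n.choose j * d j *
          ∑ i ∈ range (n - j + 1), (n - j).choose i * (-(-1) ^ (j + i) * H (j + i)) :=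
        sum_choose_mul_sum_choose _ d n
    _ = _ := by
      rw [sum_range_succ, add_comm]
      congr 1
      · rw [Nat.sub_self, sum_range_one, add_zero, ← hsign]
        simp only [Nat.choose_self, Nat.cast_one]
        ring
      · refine sum_congr rfl fun j hj ↦ ?_
        obtain ⟨r, hr⟩ : ∃ r, n - j = r + 1 := ⟨n - j - 1, by grind⟩
        rw [hr, show n = j + r + 1 by omega, mul_right_comm,
          choose_mul_sum_choose_mul_signed_of_fwdDiff_eq_inv hΔH]
        push_cast
        ring

theorem stmt_14 (c d : ℕ → ℝ)
    (hc : ∀ n, c n = ∑ k ∈ Finset.range (n+1), (n.choose k : ℝ) * d k)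
    (H : ℕ → ℝ) (hH : ∀ n, H n = ∑ j ∈ Finset.range n, (1 : ℝ) / (j + 1))
    (n : ℕ) (hn : 1 ≤ n) :
    ∑ k ∈ Finset.range (n+1), (n.choose k : ℝ) * (-1 : ℝ)^(k - 1) * H k * c k =
      (-1 : ℝ)^(n - 1) * H n * d n + ∑ m ∈ Finset.range n, (-1 : ℝ)^m * d m / (n - m : ℕ) :=
  stmt_14_general c d hc H hH n
end

section
/- For n ≥ 1, ∑_{k=0}^n C(n,k) * (-1)^{k-1} * H k² / (k+1) = H n² / (n+1) - ∑_{m=0}^{n-1} H m / ((n-m)(m+1)), where H k is the k-th harmonic number. -/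
/-!
Write `T f n = ∑ₖ (-1)ᵏ C(n,k) f k`. Pascal's rule gives `T f (n+1) = -T (Δf) n`, and absorption
`C(n,k)/(k+1) = C(n+1,k+1)/(n+1)` gives `T (f k/(k+1)) n = (T f 0 + ⋯ + T f n)/(n+1)`. Starting from
`T 1 (n+1) = 0`, these two rules evaluate in turn `T (1/(k+1))`, `T H`, `T (H/(k+1))`,
`T (1/(k+1)²)`, `T (H²)` and finally the left side, which is `-T (H²/(k+1)) n`. The right side
is evaluated with the partial fractions `1/((n-m)(m+1)) = (1/(n-m) + 1/(m+1))/(n+1)` and the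
convolution `∑_{m<n} H_m/(n-m) = H_n² - ∑_{m<n} 1/(m+1)²`.
-/

open Finset

section BinomTransform

variable {R : Type*} [CommRing R]

def binomTransform (f : ℕ → R) (n : ℕ) : R :=
  ∑ k ∈ range (n + 1), (-1) ^ k * n.choose k * f k

@[simp]
lemma binomTransform_zero (f : ℕ → R) : binomTransform f 0 = f 0 := by
  simp [binomTransform]

lemma binomTransform_add (f g : ℕ → R) (n : ℕ) :
    binomTransform (fun k => f k + g k) n = binomTransform f n + binomTransform g n := by
  simp only [binomTransform, mul_add, sum_add_distrib]

lemma binomTransform_const_mul (c : R) (f : ℕ → R) (n : ℕ) :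
    binomTransform (fun k => c * f k) n = c * binomTransform f n := by
  simp only [binomTransform, mul_sum]
  exact sum_congr rfl fun k _ => by ring

lemma binomTransform_succ (f : ℕ → R) (n : ℕ) :
    binomTransform f (n + 1) = -binomTransform (fun k => f (k + 1) - f k) n := by
  have pascal : ∀ k ∈ range (n + 1), (-1 : R) ^ (k + 1) * (n + 1).choose (k + 1) * f (k + 1) =
      (-1) ^ (k + 1) * n.choose (k + 1) * f (k + 1) - (-1) ^ k * n.choose k * f (k + 1) := by
    intro k _
    rw [Nat.choose_succ_succ', Nat.cast_add]
    ring
  rw [binomTransform, sum_range_succ', sum_congr rfl pascal, sum_sub_distrib,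
    sum_range_succ _ n, Nat.choose_succ_self]
  simp only [binomTransform, mul_sub, sum_sub_distrib]
  rw [sum_range_succ' (fun k => (-1 : R) ^ k * n.choose k * f k)]
  simp only [Nat.cast_zero, mul_zero, zero_mul, add_zero, pow_zero, Nat.choose_zero_right,
    Nat.cast_one, one_mul]
  ring

lemma binomTransform_const_succ (c : R) (n : ℕ) : binomTransform (fun _ => c) (n + 1) = 0 := by
  rw [binomTransform_succ]
  simp [binomTransform]

lemma sum_range_binomTransform (f : ℕ → R) (n : ℕ) :
    ∑ m ∈ range n, binomTransform f m = ∑ k ∈ range n, (-1) ^ k * n.choose (k + 1) * f k := by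
  induction n with
  | zero => simp
  | succ n ih =>
    rw [sum_range_succ, ih, sum_range_succ _ n, binomTransform, sum_range_succ _ n,
      Nat.choose_self, Nat.choose_self]
    simp only [Nat.choose_succ_succ', Nat.cast_add, add_mul, mul_add, sum_add_distrib]
    ring

lemma binomTransform_div_succ {K : Type*} [Field K] [CharZero K] (f : ℕ → K) (n : ℕ) :
    binomTransform (fun k => f k / (k + 1)) n =
      (∑ m ∈ range (n + 1), binomTransform f m) / (n + 1) := by
  rw [sum_range_binomTransform, eq_div_iff (Nat.cast_add_one_ne_zero n), binomTransform, sum_mul]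
  refine sum_congr rfl fun k _ => ?_
  have absorb : ((n : K) + 1) * n.choose k = (n + 1).choose (k + 1) * (k + 1) := by
    exact_mod_cast Nat.add_one_mul_choose_eq n k
  calc (-1) ^ k * n.choose k * (f k / (k + 1)) * (n + 1)
      = (-1) ^ k * f k * (((n : K) + 1) * n.choose k) / (k + 1) := by ring
    _ = (-1) ^ k * (n + 1).choose (k + 1) * f k := by
      rw [absorb]; field_simp [Nat.cast_add_one_ne_zero k]

lemma binomTransform_inv_succ {K : Type*} [Field K] [CharZero K] (n : ℕ) :
    binomTransform (fun k => ((k : K) + 1)⁻¹) n = ((n : K) + 1)⁻¹ := by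
  have h := binomTransform_div_succ (fun _ => (1 : K)) n
  rw [sum_range_succ', sum_eq_zero fun m _ => binomTransform_const_succ 1 m] at h
  simpa using h

end BinomTransform

lemma binomTransform_harmonic_succ (n : ℕ) :
    binomTransform harmonic (n + 1) = -((n : ℚ) + 1)⁻¹ := by
  rw [binomTransform_succ]
  simp only [harmonic_succ, add_sub_cancel_left]
  push_cast
  rw [binomTransform_inv_succ]

lemma binomTransform_harmonic_div_succ (n : ℕ) :
    binomTransform (fun k => harmonic k / (k + 1)) n = -harmonic n / (n + 1) := by
  rw [binomTransform_div_succ, sum_range_succ']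
  simp [binomTransform_harmonic_succ, harmonic]

lemma binomTransform_inv_succ_sq (n : ℕ) :
    binomTransform (fun k => ((k : ℚ) + 1)⁻¹ ^ 2) n = harmonic (n + 1) / (n + 1) := by
  simp only [sq, ← div_eq_inv_mul, binomTransform_div_succ, binomTransform_inv_succ]
  simp [harmonic]

lemma binomTransform_harmonic_sq_succ (n : ℕ) :
    binomTransform (fun k => harmonic k ^ 2) (n + 1) =
      (2 * harmonic n - harmonic (n + 1)) / (n + 1) := by
  have square_diff : (fun k => harmonic (k + 1) ^ 2 - harmonic k ^ 2) =
      fun k => 2 * (harmonic k / (k + 1)) + ((k : ℚ) + 1)⁻¹ ^ 2 := by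
    funext k
    rw [harmonic_succ]
    push_cast
    ring
  rw [binomTransform_succ, square_diff, binomTransform_add, binomTransform_const_mul,
    binomTransform_harmonic_div_succ, binomTransform_inv_succ_sq]
  ring

lemma binomTransform_harmonic_sq_div_succ (n : ℕ) :
    binomTransform (fun k => harmonic k ^ 2 / (k + 1)) n =
      (∑ m ∈ range n, harmonic m / (m + 1) - ∑ m ∈ range n, ((m : ℚ) + 1)⁻¹ ^ 2) / (n + 1) := by
  rw [binomTransform_div_succ, sum_range_succ', binomTransform_zero, harmonic_zero,
    ← sum_sub_distrib]
  congr 1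
  simp only [zero_pow two_ne_zero, add_zero]
  refine sum_congr rfl fun m _ => ?_
  rw [binomTransform_harmonic_sq_succ, harmonic_succ]
  push_cast
  ring

lemma sum_range_inv_sub_eq_harmonic (n : ℕ) : ∑ m ∈ range n, ((n - m : ℕ) : ℚ)⁻¹ = harmonic n := by
  rw [harmonic, ← sum_range_reflect]
  refine sum_congr rfl fun m hm => ?_
  rw [mem_range] at hm
  congr 2
  omega

lemma inv_sub_mul_inv_succ {m n : ℕ} (hmn : m < n) :
    (((n - m : ℕ) : ℚ) * (m + 1))⁻¹ = (((n - m : ℕ) : ℚ)⁻¹ + ((m : ℚ) + 1)⁻¹) / (n + 1) := by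
  rw [Nat.cast_sub hmn.le]
  have : (n : ℚ) - m ≠ 0 := sub_ne_zero.mpr (by exact_mod_cast hmn.ne')
  field_simp
  ring

lemma sum_range_inv_sub_mul_inv_succ (n : ℕ) :
    ∑ m ∈ range n, (((n - m : ℕ) : ℚ) * (m + 1))⁻¹ = 2 * harmonic n / (n + 1) := by
  rw [sum_congr rfl fun m hm => inv_sub_mul_inv_succ (mem_range.mp hm), ← sum_div,
    sum_add_distrib, sum_range_inv_sub_eq_harmonic]
  simp [harmonic]
  ring

lemma sum_range_harmonic_div_sub (n : ℕ) :
    ∑ m ∈ range n, harmonic m / ((n - m : ℕ) : ℚ) =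
      harmonic n ^ 2 - ∑ m ∈ range n, ((m : ℚ) + 1)⁻¹ ^ 2 := by
  induction n with
  | zero => simp
  | succ n ih =>
    rw [sum_range_succ', harmonic_zero, zero_div, add_zero]
    have cross_terms : ∑ m ∈ range n, ((m + 1 : ℕ) : ℚ)⁻¹ / ((n - m : ℕ) : ℚ) =
        2 * harmonic n / (n + 1) := by
      rw [← sum_range_inv_sub_mul_inv_succ]
      refine sum_congr rfl fun m _ => ?_
      rw [mul_inv, div_eq_mul_inv, mul_comm, Nat.cast_succ]
    simp only [Nat.add_sub_add_right, harmonic_succ, add_div, sum_add_distrib, ih, cross_terms,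
      sum_range_succ]
    push_cast
    field_simp
    ring

theorem stmt_16_general (H : ℕ → ℚ) (hH : ∀ n, H n = ∑ j ∈ Finset.range n, (1 : ℚ) / (j + 1))
    (n : ℕ) :
    ∑ k ∈ Finset.range (n+1), (n.choose k : ℚ) * (-1 : ℚ)^(k - 1) * (H k)^2 / (k + 1) =
      (H n)^2 / (n + 1) - ∑ m ∈ Finset.range n, H m / (((n - m : ℕ) : ℚ) * (m + 1)) := by
  obtain rfl : H = harmonic := funext fun k => by simp [hH, harmonic]
  have lhs : ∑ k ∈ range (n + 1), (n.choose k : ℚ) * (-1) ^ (k - 1) * harmonic k ^ 2 / (k + 1) =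
      -binomTransform (fun k => harmonic k ^ 2 / (k + 1)) n := by
    rw [binomTransform, ← sum_neg_distrib]
    refine sum_congr rfl fun k _ => ?_
    cases k with
    -- `0 - 1 = 0` in `ℕ` gives this term the wrong sign, but it vanishes as `harmonic 0 = 0`.
    | zero => simp
    | succ k => rw [Nat.add_sub_cancel, pow_succ]; ring
  have rhs : ∀ m ∈ range n, harmonic m / (((n - m : ℕ) : ℚ) * (m + 1)) =
      (harmonic m / (n - m : ℕ) + harmonic m / (m + 1)) / (n + 1) := fun m hm => by
    rw [div_eq_mul_inv, inv_sub_mul_inv_succ (mem_range.mp hm)]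
    ring
  rw [lhs, binomTransform_harmonic_sq_div_succ, sum_congr rfl rhs, ← sum_div, sum_add_distrib,
    sum_range_harmonic_div_sub]
  ring

theorem stmt_16 (H : ℕ → ℚ) (hH : ∀ n, H n = ∑ j ∈ Finset.range n, (1 : ℚ) / (j + 1))
    (n : ℕ) (hn : 1 ≤ n) :
    ∑ k ∈ Finset.range (n+1), (n.choose k : ℚ) * (-1 : ℚ)^(k - 1) * (H k)^2 / (k + 1) =
      (H n)^2 / (n + 1) - ∑ m ∈ Finset.range n, H m / (((n - m : ℕ) : ℚ) * (m + 1)) :=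
  stmt_16_general H hH n
end

section
/- Let c, d : ℕ → ℝ satisfy c n = ∑_{k=0}^n C(n,k) d k for all n. Then for all n ≥ 0, ∑_{k=0}^n C(n,k) * (-1)^{k-1} * F k * c k = ∑_{m=0}^n C(n,m) * d m * F_{n-2m}, where F denotes the Fibonacci sequence extended to negative indices by F_{-j} = (-1)^{j+1} F j. -/
/-- Fibonacci sequence extended to integer indices: `fibZ (-j) = (-1)^(j+1) * fib j`. -/
noncomputable def fibZ (z : ℤ) : ℝ :=
  if 0 ≤ z then (Nat.fib z.toNat : ℝ) else (-1 : ℝ)^((-z).toNat + 1) * (Nat.fib (-z).toNat : ℝ)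

/-!
By Binet's formula, `(-1)^(k-1) F k = F (-k) = (φ⁻¹ ^ k - ψ⁻¹ ^ k) / √5`, so it suffices to treat
geometric weights `y ^ k`. If `c` is the binomial transform of `d`, then
`∑ k, C(n,k) y^k c k = ∑ j, C(n,j) d j y^j (1 + y)^(n-j)`, and for `y = x⁻¹` with `x² = x + 1`
we have `1 + y = x`, so the `j`-th weight is `x ^ (n - 2j)`; Binet's formula again turns the
difference of the two sums into `∑ j, C(n,j) d j F (n - 2j)`.
-/

open Finset Real goldenRatio

theorem fibZ_eq_intFib (z : ℤ) : fibZ z = Int.fib z := by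
  obtain ⟨n, rfl | rfl⟩ := z.eq_nat_or_neg
  · simp [fibZ]
  · rcases n with _ | n
    · simp [fibZ]
    · have hneg : ¬ 0 ≤ -((n + 1 : ℕ) : ℤ) := by omega
      rw [fibZ, if_neg hneg, Int.fib_neg_natCast, neg_neg, Int.toNat_natCast]
      push_cast
      ring

theorem neg_one_pow_pred_mul_fib (k : ℕ) : (-1 : ℝ) ^ (k - 1) * Nat.fib k = Int.fib (-k) := by
  rw [Int.fib_neg_natCast]
  rcases k with _ | k <;> simp [pow_succ]

section BinomialTransform

variable {R : Type*} [CommSemiring R]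

theorem sum_Ico_choose_mul_choose_mul_pow {j n : ℕ} (hj : j ≤ n) (x : R) :
    ∑ k ∈ Ico j (n + 1), (n.choose k * k.choose j : R) * x ^ k =
      n.choose j * x ^ j * (x + 1) ^ (n - j) := by
  rw [sum_Ico_eq_sum_range, add_pow, mul_sum, show n + 1 - j = n - j + 1 by omega]
  refine sum_congr rfl fun i _ => ?_
  rw [← Nat.cast_mul, Nat.choose_mul (Nat.le_add_right j i), Nat.add_sub_cancel_left]
  push_cast
  ring

theorem sum_choose_mul_pow_mul_of_eq_sum_choose_mul (c d : ℕ → R)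
    (hc : ∀ n, c n = ∑ k ∈ range (n + 1), (n.choose k : R) * d k) (x : R) (n : ℕ) :
    ∑ k ∈ range (n + 1), (n.choose k : R) * x ^ k * c k =
      ∑ j ∈ range (n + 1), (n.choose j : R) * d j * (x ^ j * (x + 1) ^ (n - j)) := by
  simp_rw [hc, mul_sum]
  rw [sum_comm' (t' := range (n + 1)) (s' := fun j => Ico j (n + 1))
    (fun _ _ => by simp only [mem_range, mem_Ico]; omega)]
  refine sum_congr rfl fun j hj => ?_
  rw [mul_right_comm, ← mul_assoc,
    ← sum_Ico_choose_mul_choose_mul_pow (Nat.lt_succ_iff.mp (mem_range.mp hj)), sum_mul]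
  refine sum_congr rfl fun k _ => ?_
  ring

end BinomialTransform

theorem inv_pow_mul_inv_add_one_pow {K : Type*} [Field K] {x : K} (hx : x ^ 2 = x + 1) {j n : ℕ}
    (hj : j ≤ n) : x⁻¹ ^ j * (x⁻¹ + 1) ^ (n - j) = x ^ ((n : ℤ) - 2 * j) := by
  have hx0 : x ≠ 0 := by rintro rfl; norm_num at hx
  have hinv : x⁻¹ + 1 = x := by field_simp; linear_combination -hx
  rw [hinv, show (n : ℤ) - 2 * j = ((n - j : ℕ) : ℤ) + -(j : ℤ) by push_cast [hj]; ring,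
    zpow_add₀ hx0, zpow_neg, zpow_natCast, zpow_natCast, inv_pow, mul_comm]

theorem sum_choose_mul_inv_pow_mul_of_eq_sum_choose_mul {K : Type*} [Field K] (c d : ℕ → K)
    (hc : ∀ n, c n = ∑ k ∈ range (n + 1), (n.choose k : K) * d k) {x : K} (hx : x ^ 2 = x + 1)
    (n : ℕ) :
    ∑ k ∈ range (n + 1), (n.choose k : K) * x⁻¹ ^ k * c k =
      ∑ j ∈ range (n + 1), (n.choose j : K) * d j * x ^ ((n : ℤ) - 2 * j) := by
  rw [sum_choose_mul_pow_mul_of_eq_sum_choose_mul c d hc]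
  refine sum_congr rfl fun j hj => ?_
  rw [inv_pow_mul_inv_add_one_pow hx (Nat.lt_succ_iff.mp (mem_range.mp hj))]

theorem stmt_18 (c d : ℕ → ℝ)
    (hc : ∀ n, c n = ∑ k ∈ Finset.range (n+1), (n.choose k : ℝ) * d k)
    (n : ℕ) :
    ∑ k ∈ Finset.range (n+1), (n.choose k : ℝ) * (-1 : ℝ)^(k - 1) * (Nat.fib k : ℝ) * c k =
      ∑ m ∈ Finset.range (n+1), (n.choose m : ℝ) * d m * fibZ ((n : ℤ) - 2 * m) := by
  have binet_neg (k : ℕ) : (n.choose k : ℝ) * (-1 : ℝ) ^ (k - 1) * Nat.fib k * c k =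
      ((n.choose k : ℝ) * φ⁻¹ ^ k * c k - (n.choose k : ℝ) * ψ⁻¹ ^ k * c k) / √5 := by
    rw [mul_assoc (n.choose k : ℝ), neg_one_pow_pred_mul_fib, coe_intFib_eq, zpow_neg, zpow_neg,
      zpow_natCast, zpow_natCast, inv_pow, inv_pow]
    ring
  simp_rw [binet_neg, ← sum_div, sum_sub_distrib,
    sum_choose_mul_inv_pow_mul_of_eq_sum_choose_mul c d hc goldenRatio_sq,
    sum_choose_mul_inv_pow_mul_of_eq_sum_choose_mul c d hc goldenConj_sq, ← sum_sub_distrib, sum_div,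
    fibZ_eq_intFib, coe_intFib_eq]
  refine sum_congr rfl fun j _ => ?_
  ring
end

section
/- For all n ≥ 0, ∑_{k=0}^n C(n,k) * B k * (F k + F_{n-2k}) = 0, where B k are the Bernoulli numbers (with B 1 = -1/2) and F is the Fibonacci sequence extended to negative indices by F_{-j} = (-1)^{j+1} F j. -/
/-!
Multiply by `√5` and use Binet's formula, which also holds at negative indices. With
`T(x) = ∑ C(n,k) B_k x^k` the sum becomes `T(φ) - T(ψ) + φⁿ T(ψ²) - ψⁿ T(φ²)`. Since
`T(x) = xⁿ Bₙ(1/x)` for the Bernoulli polynomial `Bₙ` and `1/φ = -ψ`, the four terms are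
`φⁿ Bₙ(-ψ)`, `ψⁿ Bₙ(-φ)`, `(-1)ⁿ ψⁿ Bₙ(φ²)` and `(-1)ⁿ φⁿ Bₙ(ψ²)`. As `φ² = 1 + φ`, the reflection
`Bₙ(1 - x) = (-1)ⁿ Bₙ(x)` gives `Bₙ(-φ) = (-1)ⁿ Bₙ(φ²)`, likewise for `ψ`, and the terms cancel
in pairs.
-/

/-- Fibonacci sequence extended to integer indices: `fibZQ (-j) = (-1)^(j+1) * fib j`. -/
def fibZQ (z : ℤ) : ℚ :=
  if 0 ≤ z then (Nat.fib z.toNat : ℚ) else (-1 : ℚ)^((-z).toNat + 1) * (Nat.fib (-z).toNat : ℚ)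

open Finset

section BernoulliBinomialSum

open Polynomial

variable {A : Type*} [CommRing A] [Algebra ℚ A]

def bernoulliBinomialSum (n : ℕ) (x : A) : A :=
  ∑ k ∈ range (n + 1), algebraMap ℚ A (n.choose k * _root_.bernoulli k) * x ^ k

theorem aeval_one_sub_bernoulli (n : ℕ) (y : A) :
    aeval (1 - y) (Polynomial.bernoulli n) = (-1) ^ n * aeval y (Polynomial.bernoulli n) := by
  simpa [aeval_comp] using congrArg (aeval y) (bernoulli_comp_one_sub_X n)

theorem bernoulliBinomialSum_eq_pow_mul_aeval {x y : A} (h : x * y = 1) (n : ℕ) :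
    bernoulliBinomialSum n x = x ^ n * aeval y (Polynomial.bernoulli n) := by
  rw [bernoulliBinomialSum, Polynomial.bernoulli, map_sum, mul_sum]
  refine sum_congr rfl fun k hk => ?_
  have hxy : x ^ n * y ^ (n - k) = x ^ k := by
    obtain ⟨j, rfl⟩ := Nat.exists_eq_add_of_le (mem_range_succ_iff.mp hk)
    rw [Nat.add_sub_cancel_left, pow_add, mul_assoc, ← mul_pow, h, one_pow, mul_one]
  rw [aeval_monomial, mul_comm (_root_.bernoulli k), ← hxy]
  ring

theorem bernoulliBinomialSum_sub_add_sub_eq_zero {a b : A} (hadd : a + b = 1) (hmul : a * b = -1)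
    (n : ℕ) :
    bernoulliBinomialSum n a - bernoulliBinomialSum n b
      + a ^ n * bernoulliBinomialSum n (b ^ 2) - b ^ n * bernoulliBinomialSum n (a ^ 2) = 0 := by
  have hsq : ∀ {x y : A}, x * y = -1 → x ^ 2 * y ^ 2 = 1 := fun h => by
    rw [← mul_pow, h, neg_one_sq]
  have hneg : ∀ {x y : A}, x * y = -1 → x * -y = 1 := fun h => by rw [mul_neg, h, neg_neg]
  have ha : 1 - a ^ 2 = -a := by linear_combination (-a) * hadd + hmul
  have hb : 1 - b ^ 2 = -b := by linear_combination (-b) * hadd + hmul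
  have hba : b * a = -1 := by rw [mul_comm, hmul]
  rw [bernoulliBinomialSum_eq_pow_mul_aeval (hneg hmul),
    bernoulliBinomialSum_eq_pow_mul_aeval (hneg hba),
    bernoulliBinomialSum_eq_pow_mul_aeval (hsq hba),
    bernoulliBinomialSum_eq_pow_mul_aeval (hsq hmul), ← ha, ← hb,
    aeval_one_sub_bernoulli, aeval_one_sub_bernoulli]
  have hpow : a ^ n * b ^ n = (-1) ^ n := by rw [← mul_pow, hmul]
  linear_combination (aeval (a ^ 2) (Polynomial.bernoulli n) * b ^ n
    - aeval (b ^ 2) (Polynomial.bernoulli n) * a ^ n) * hpow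

end BernoulliBinomialSum

theorem fibZQ_eq_intFib (z : ℤ) : fibZQ z = Int.fib z := by
  obtain ⟨m, rfl | rfl⟩ := z.eq_nat_or_neg
  · simp [fibZQ]
  · simp [fibZQ, Int.fib_neg_natCast]

open Real goldenRatio

theorem goldenRatio_zpow_sub_two_mul (n k : ℕ) : φ ^ ((n : ℤ) - 2 * k) = φ ^ n * (ψ ^ 2) ^ k := by
  rw [zpow_sub₀ goldenRatio_ne_zero, zpow_natCast, ← Nat.cast_ofNat, ← Nat.cast_mul, zpow_natCast,
    div_eq_mul_inv, ← inv_pow, inv_goldenRatio, pow_mul, neg_sq]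

theorem goldenConj_zpow_sub_two_mul (n k : ℕ) : ψ ^ ((n : ℤ) - 2 * k) = ψ ^ n * (φ ^ 2) ^ k := by
  rw [zpow_sub₀ goldenConj_ne_zero, zpow_natCast, ← Nat.cast_ofNat, ← Nat.cast_mul, zpow_natCast,
    div_eq_mul_inv, ← inv_pow, inv_goldenConj, pow_mul, neg_sq]

theorem fib_add_intFib_sub_two_mul_mul_sqrt_five (n k : ℕ) :
    (Nat.fib k + Int.fib ((n : ℤ) - 2 * k) : ℝ) * √5
      = φ ^ k - ψ ^ k + φ ^ n * (ψ ^ 2) ^ k - ψ ^ n * (φ ^ 2) ^ k := by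
  have h5 : √5 ≠ 0 := by positivity
  rw [coe_fib_eq, coe_intFib_eq, goldenRatio_zpow_sub_two_mul, goldenConj_zpow_sub_two_mul]
  field_simp
  ring

theorem stmt_19 (n : ℕ) :
    ∑ k ∈ Finset.range (n+1), (n.choose k : ℚ) * bernoulli k *
      ((Nat.fib k : ℚ) + fibZQ ((n : ℤ) - 2 * k)) = 0 := by
  have key := bernoulliBinomialSum_sub_add_sub_eq_zero goldenRatio_add_goldenConj
    goldenRatio_mul_goldenConj n
  simp only [bernoulliBinomialSum, map_mul, map_natCast, eq_ratCast, mul_sum, ← sum_sub_distrib,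
    ← sum_add_distrib] at key
  apply Rat.cast_injective (α := ℝ)
  refine (mul_left_inj' (show √5 ≠ 0 by positivity)).1 ?_
  rw [Rat.cast_zero, zero_mul, ← key, Rat.cast_sum, sum_mul]
  refine sum_congr rfl fun k _ => ?_
  rw [fibZQ_eq_intFib]
  push_cast
  rw [mul_assoc, fib_add_intFib_sub_two_mul_mul_sqrt_five]
  ring
end
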